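/- arXiv:2312.08201 — 3 statements merged into one kernel-verified Lean document; each statement's English description precedes it below -/
import Mathlib

section
/- Let A(v) = A_0 - B_l D(v) B_r^T and P ∈ ℝ^{n×2k} with Range(B_l) ⊆ Range(P). Then for every j ≥ 1, Range(A(v)^j P) ⊆ Range(A_0^j P) + Range(A_0^{j-1} P) + … + Range(A_0 P) + Range(P). In particular the block Krylov subspace K_m(A(v), P) is contained in K_m(A_0, P). -/
/-!
`A(v)` differs from `A₀` by `-B_l (D Bᵣᵀ)`, a map whose range lies in `Range(B_l) ⊆ Range(P)`.
So `A(v)` maps any subspace `U` into `A₀ U + Range(P)`. Starting from `Range(P)`, induction on `j`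
gives that `A(v)^j Range(P)` lies in `A₀ (Σ_{i<j} Range(A₀^i P)) + Range(P) = Σ_{i≤j} Range(A₀^i P)`.
-/

open Matrix

/-- The range (column space) of a matrix. -/
def matRange {n m : ℕ} (M : Matrix (Fin n) (Fin m) ℝ) :
    Submodule ℝ (Fin n → ℝ) :=
  LinearMap.range M.mulVecLin

namespace Submodule

variable {R V M : Type*} [Ring R] [AddCommGroup V] [Module R V] [AddCommGroup M] [Module R M]

theorem map_le_map_sup_of_range_sub_le {f g : V →ₗ[R] M} {W : Submodule R M}
    (h : LinearMap.range (f - g) ≤ W) (S : Submodule R V) : S.map f ≤ S.map g ⊔ W := by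
  rintro _ ⟨x, hx, rfl⟩
  have hfg : f x = g x + (f - g) x := by simp
  rw [hfg]
  exact add_mem_sup (mem_map_of_mem hx) (h (LinearMap.mem_range_self _ x))

theorem map_pow_le_iSup_map_pow {f g : Module.End R V} {S : Submodule R V}
    (h : LinearMap.range (f - g) ≤ S) (j : ℕ) :
    S.map (f ^ j) ≤ ⨆ i ∈ Finset.range (j + 1), S.map (g ^ i) := by
  induction j with
  | zero => simp
  | succ j ih =>
    have hS : S ≤ ⨆ i ∈ Finset.range (j + 2), S.map (g ^ i) := by
      refine le_iSup₂_of_le 0 (by simp) ?_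
      rw [pow_zero, Module.End.one_eq_id, map_id]
    have hg : (⨆ i ∈ Finset.range (j + 1), S.map (g ^ i)).map g
        ≤ ⨆ i ∈ Finset.range (j + 2), S.map (g ^ i) := by
      simp only [map_iSup, ← map_comp]
      refine iSup₂_le fun i hi => le_iSup₂_of_le (i + 1) ?_ ?_
      · simp only [Finset.mem_range] at hi ⊢
        omega
      · rw [pow_succ', Module.End.mul_eq_comp]
    calc S.map (f ^ (j + 1)) = (S.map (f ^ j)).map f := by
          rw [pow_succ', Module.End.mul_eq_comp, map_comp]
      _ ≤ (S.map (f ^ j)).map g ⊔ S := map_le_map_sup_of_range_sub_le h _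
      _ ≤ _ := sup_le ((map_mono ih).trans hg) hS

end Submodule

theorem matRange_pow_mul {n m : ℕ} (A : Matrix (Fin n) (Fin n) ℝ)
    (P : Matrix (Fin n) (Fin m) ℝ) (j : ℕ) :
    matRange (A ^ j * P) = (matRange P).map (A.mulVecLin ^ j) := by
  rw [matRange, matRange, mulVecLin_mul, LinearMap.range_comp]
  congr 1
  exact toLin'_pow A j

theorem range_mulVecLin_sub_mul_sub_mulVecLin_le {n k : ℕ} (A0 : Matrix (Fin n) (Fin n) ℝ)
    (B : Matrix (Fin n) (Fin k) ℝ) (C : Matrix (Fin k) (Fin n) ℝ) :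
    LinearMap.range ((A0 - B * C).mulVecLin - A0.mulVecLin) ≤ matRange B := by
  rintro _ ⟨v, rfl⟩
  simp only [LinearMap.sub_apply, mulVecLin_apply, sub_mulVec, ← mulVec_mulVec,
    sub_sub_cancel_left]
  exact neg_mem ⟨_, rfl⟩

theorem stmt_5_general {n k : ℕ}
    (A0 : Matrix (Fin n) (Fin n) ℝ)
    (Bl Br : Matrix (Fin n) (Fin k) ℝ)
    (D : Matrix (Fin k) (Fin k) ℝ)
    (P : Matrix (Fin n) (Fin (2 * k)) ℝ)
    (hBl : matRange Bl ≤ matRange P) :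
    (∀ j : ℕ, 1 ≤ j →
        matRange ((A0 - Bl * D * Brᵀ) ^ j * P)
          ≤ ⨆ i ∈ Finset.range (j + 1), matRange (A0 ^ i * P)) ∧
      (∀ m : ℕ,
        (⨆ i ∈ Finset.range m, matRange ((A0 - Bl * D * Brᵀ) ^ i * P))
          ≤ ⨆ i ∈ Finset.range m, matRange (A0 ^ i * P)) := by
  have hperturb := (range_mulVecLin_sub_mul_sub_mulVecLin_le A0 Bl (D * Brᵀ)).trans hBl
  rw [← Matrix.mul_assoc] at hperturb
  have key (j : ℕ) : matRange ((A0 - Bl * D * Brᵀ) ^ j * P)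
      ≤ ⨆ i ∈ Finset.range (j + 1), matRange (A0 ^ i * P) := by
    simpa only [matRange_pow_mul] using Submodule.map_pow_le_iSup_map_pow hperturb j
  refine ⟨fun j _ => key j, fun m => iSup₂_le fun j hj => (key j).trans ?_⟩
  refine biSup_mono fun i hi => ?_
  simp only [Finset.mem_range] at hi hj ⊢
  omega

/-- With `A(v) = A₀ - Bl D Brᵀ` and `Range(Bl) ⊆ Range(P)`, the range of
`A(v)^j P` is contained in the sum of the ranges of `A₀^i P`, `0 ≤ i ≤ j`;
in particular the block Krylov subspaces are nested:
`K_m(A(v), P) ⊆ K_m(A₀, P)`. -/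
theorem stmt_5 {n k : ℕ}
    (A0 : Matrix (Fin n) (Fin n) ℝ)
    (Bl Br : Matrix (Fin n) (Fin k) ℝ)
    (D : Matrix (Fin k) (Fin k) ℝ) (hD : D.IsDiag)
    (P : Matrix (Fin n) (Fin (2 * k)) ℝ)
    (hBl : matRange Bl ≤ matRange P) :
    (∀ j : ℕ, 1 ≤ j →
        matRange ((A0 - Bl * D * Brᵀ) ^ j * P)
          ≤ ⨆ i ∈ Finset.range (j + 1), matRange (A0 ^ i * P)) ∧
      (∀ m : ℕ,
        (⨆ i ∈ Finset.range m, matRange ((A0 - Bl * D * Brᵀ) ^ i * P))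
          ≤ ⨆ i ∈ Finset.range m, matRange (A0 ^ i * P)) :=
  stmt_5_general A0 Bl Br D P hBl
end

section
/- Let A(v) = A_0 - B_l D(v) B_r^T with A_0 and A(v) invertible, D(v) invertible diagonal, and P ∈ ℝ^{n×2k} such that Range(B_l) ⊆ Range(P). If D(v)^{-1} - B_r^T A_0^{-1} B_l is invertible, then Range(A(v)^{-1} P) ⊆ Range(A_0^{-1} P), and more generally Range(A(v)^{-j} P) ⊆ Range(A_0^{-j}P) + … + Range(A_0^{-1}P) for all j ≥ 1, so K_m(A(v)^{-1}, A(v)^{-1}P) ⊆ K_m(A_0^{-1}, A_0^{-1}P). -/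
/-
Write `A = A₀ - Bl D Brᵀ`. The resolvent identity `A⁻¹ M = A₀⁻¹ M + A₀⁻¹ (Bl D Brᵀ) A⁻¹ M`
shows that multiplying by `A⁻¹` instead of `A₀⁻¹` only adds vectors of
`Range(A₀⁻¹ Bl) ⊆ Range(A₀⁻¹ P)`. Iterating, each further power of `A⁻¹` raises the degree
of the block Krylov space of `A₀⁻¹` generated by `A₀⁻¹ P` by one.
-/

open Matrix

/-- The block Krylov space `K_m(A, Q) = Range [Q, A Q, …, A^{m-1} Q]`. -/
def blockKrylov {n q : ℕ} (A : Matrix (Fin n) (Fin n) ℝ) (Q : Matrix (Fin n) (Fin q) ℝ)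
    (m : ℕ) : Submodule ℝ (Fin n → ℝ) :=
  ⨆ i ∈ Finset.range m, matRange (A ^ i * Q)

section MatRange

variable {n p q : ℕ}

lemma matRange_mul_eq_map (M : Matrix (Fin n) (Fin p) ℝ) (N : Matrix (Fin p) (Fin q) ℝ) :
    matRange (M * N) = (matRange N).map M.mulVecLin := by
  simp only [matRange, Matrix.mulVecLin_mul, LinearMap.range_comp]

lemma matRange_mul_le (M : Matrix (Fin n) (Fin p) ℝ) (N : Matrix (Fin p) (Fin q) ℝ) :
    matRange (M * N) ≤ matRange M := by
  rw [matRange_mul_eq_map]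
  exact LinearMap.map_le_range

lemma matRange_mul_mono (M : Matrix (Fin n) (Fin p) ℝ) {N : Matrix (Fin p) (Fin q) ℝ}
    {r : ℕ} {N' : Matrix (Fin p) (Fin r) ℝ} (h : matRange N ≤ matRange N') :
    matRange (M * N) ≤ matRange (M * N') := by
  rw [matRange_mul_eq_map, matRange_mul_eq_map]
  exact Submodule.map_mono h

lemma matRange_add_le (M N : Matrix (Fin n) (Fin p) ℝ) :
    matRange (M + N) ≤ matRange M ⊔ matRange N := by
  rintro _ ⟨v, rfl⟩
  rw [Matrix.mulVecLin_apply, Matrix.add_mulVec]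
  exact Submodule.add_mem_sup ⟨v, rfl⟩ ⟨v, rfl⟩

lemma matRange_inv_mul_le_sup {A B : Matrix (Fin n) (Fin n) ℝ} (hA : IsUnit A.det)
    (hB : IsUnit B.det) {P : Matrix (Fin n) (Fin p) ℝ} (hP : matRange (A - B) ≤ matRange P)
    (M : Matrix (Fin n) (Fin q) ℝ) :
    matRange (B⁻¹ * M) ≤ matRange (A⁻¹ * M) ⊔ matRange (A⁻¹ * P) := by
  have resolvent : B⁻¹ * M = A⁻¹ * M + A⁻¹ * (A - B) * (B⁻¹ * M) := by
    rw [Matrix.mul_sub, Matrix.sub_mul, Matrix.nonsing_inv_mul _ hA, Matrix.one_mul,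
      Matrix.mul_assoc, ← Matrix.mul_assoc B, Matrix.mul_nonsing_inv _ hB, Matrix.one_mul]
    abel
  rw [resolvent]
  refine (matRange_add_le _ _).trans (sup_le_sup_left ?_ _)
  exact (matRange_mul_le _ _).trans (matRange_mul_mono _ hP)

end MatRange

section BlockKrylov

variable {n q : ℕ} (A : Matrix (Fin n) (Fin n) ℝ) (Q : Matrix (Fin n) (Fin q) ℝ)

lemma matRange_pow_mul_le_blockKrylov {i m : ℕ} (hi : i < m) :
    matRange (A ^ i * Q) ≤ blockKrylov A Q m :=
  le_iSup₂ (f := fun i _ => matRange (A ^ i * Q)) i (Finset.mem_range.mpr hi)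

lemma blockKrylov_mono {m m' : ℕ} (h : m ≤ m') : blockKrylov A Q m ≤ blockKrylov A Q m' :=
  iSup₂_le fun _ hi =>
    matRange_pow_mul_le_blockKrylov A Q ((Finset.mem_range.mp hi).trans_le h)

lemma matRange_mul_le_blockKrylov_succ {p m : ℕ} {X : Matrix (Fin n) (Fin p) ℝ}
    (hX : matRange X ≤ blockKrylov A Q m) :
    matRange (A * X) ≤ blockKrylov A Q (m + 1) := by
  rw [matRange_mul_eq_map, Submodule.map_le_iff_le_comap]
  refine hX.trans (iSup₂_le fun i hi => Submodule.map_le_iff_le_comap.mp ?_)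
  rw [← matRange_mul_eq_map, ← Matrix.mul_assoc, ← pow_succ']
  exact matRange_pow_mul_le_blockKrylov A Q
    (Nat.succ_lt_succ (Finset.mem_range.mp hi))

lemma blockKrylov_mul_le_iSup_Icc (j : ℕ) :
    blockKrylov A (A * Q) j ≤ ⨆ i ∈ Finset.Icc 1 j, matRange (A ^ i * Q) := by
  refine iSup₂_le fun i hi => ?_
  rw [← Matrix.mul_assoc, ← pow_succ]
  exact le_iSup₂ (f := fun i _ => matRange (A ^ i * Q)) (i + 1)
    (Finset.mem_Icc.mpr ⟨Nat.le_add_left 1 i, Finset.mem_range.mp hi⟩)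

end BlockKrylov

section Perturbation

variable {n p : ℕ} {A B : Matrix (Fin n) (Fin n) ℝ} {P : Matrix (Fin n) (Fin p) ℝ}

lemma matRange_pow_mul_le_blockKrylov_of_le_sup
    (hBA : ∀ {q : ℕ} (M : Matrix (Fin n) (Fin q) ℝ),
      matRange (B * M) ≤ matRange (A * M) ⊔ matRange (A * P)) (i : ℕ) :
    matRange (B ^ i * (B * P)) ≤ blockKrylov A (A * P) (i + 1) := by
  have hAP : ∀ m, matRange (A * P) ≤ blockKrylov A (A * P) (m + 1) := fun m => by
    simpa using matRange_pow_mul_le_blockKrylov A (A * P) (Nat.succ_pos m)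
  induction i with
  | zero => simpa using (hBA P).trans (sup_le (hAP 0) (hAP 0))
  | succ i ih =>
    rw [pow_succ', Matrix.mul_assoc]
    exact (hBA _).trans (sup_le (matRange_mul_le_blockKrylov_succ A (A * P) ih) (hAP _))

lemma blockKrylov_le_of_le_sup
    (hBA : ∀ {q : ℕ} (M : Matrix (Fin n) (Fin q) ℝ),
      matRange (B * M) ≤ matRange (A * M) ⊔ matRange (A * P)) (m : ℕ) :
    blockKrylov B (B * P) m ≤ blockKrylov A (A * P) m :=
  iSup₂_le fun i hi => (matRange_pow_mul_le_blockKrylov_of_le_sup hBA i).trans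
    (blockKrylov_mono A (A * P) (Finset.mem_range.mp hi))

end Perturbation

theorem stmt_6_general {n k : ℕ}
    (A0 : Matrix (Fin n) (Fin n) ℝ) (hA0 : IsUnit A0.det)
    (Bl Br : Matrix (Fin n) (Fin k) ℝ)
    (D : Matrix (Fin k) (Fin k) ℝ)
    (hAv : IsUnit (A0 - Bl * D * Brᵀ).det)
    (P : Matrix (Fin n) (Fin (2 * k)) ℝ)
    (hBl : matRange Bl ≤ matRange P) :
    matRange ((A0 - Bl * D * Brᵀ)⁻¹ * P) ≤ matRange (A0⁻¹ * P) ∧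
      (∀ j : ℕ, 1 ≤ j →
        matRange (((A0 - Bl * D * Brᵀ)⁻¹) ^ j * P)
          ≤ ⨆ i ∈ Finset.Icc 1 j, matRange ((A0⁻¹) ^ i * P)) ∧
      (∀ m : ℕ,
        (⨆ i ∈ Finset.range m,
            matRange (((A0 - Bl * D * Brᵀ)⁻¹) ^ i * ((A0 - Bl * D * Brᵀ)⁻¹ * P)))
          ≤ ⨆ i ∈ Finset.range m, matRange ((A0⁻¹) ^ i * (A0⁻¹ * P))) := by
  have hPert : matRange (A0 - (A0 - Bl * D * Brᵀ)) ≤ matRange P := by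
    rw [sub_sub_cancel]
    exact (matRange_mul_le _ _).trans ((matRange_mul_le _ _).trans hBl)
  have hBA := fun {q : ℕ} (M : Matrix (Fin n) (Fin q) ℝ) =>
    matRange_inv_mul_le_sup hA0 hAv hPert M
  refine ⟨by simpa using hBA P, fun j hj => ?_, blockKrylov_le_of_le_sup hBA⟩
  obtain ⟨i, rfl⟩ := Nat.exists_eq_add_of_le' hj
  rw [pow_succ, Matrix.mul_assoc]
  exact (matRange_pow_mul_le_blockKrylov_of_le_sup hBA i).trans
    (blockKrylov_mul_le_iSup_Icc _ _ _)

/-- With `A(v) = A₀ - Bl D Brᵀ` invertible, `Range(Bl) ⊆ Range(P)`, and the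
SMW core matrix `D⁻¹ - Brᵀ A₀⁻¹ Bl` invertible, the ranges of negative powers
are nested and hence the inverse block Krylov subspaces are nested. -/
theorem stmt_6 {n k : ℕ}
    (A0 : Matrix (Fin n) (Fin n) ℝ) (hA0 : IsUnit A0.det)
    (Bl Br : Matrix (Fin n) (Fin k) ℝ)
    (D : Matrix (Fin k) (Fin k) ℝ) (hDdiag : D.IsDiag) (hD : IsUnit D.det)
    (hAv : IsUnit (A0 - Bl * D * Brᵀ).det)
    (P : Matrix (Fin n) (Fin (2 * k)) ℝ)
    (hBl : matRange Bl ≤ matRange P)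
    (hS : IsUnit (D⁻¹ - Brᵀ * A0⁻¹ * Bl).det) :
    matRange ((A0 - Bl * D * Brᵀ)⁻¹ * P) ≤ matRange (A0⁻¹ * P) ∧
      (∀ j : ℕ, 1 ≤ j →
        matRange (((A0 - Bl * D * Brᵀ)⁻¹) ^ j * P)
          ≤ ⨆ i ∈ Finset.Icc 1 j, matRange ((A0⁻¹) ^ i * P)) ∧
      (∀ m : ℕ,
        (⨆ i ∈ Finset.range m,
            matRange (((A0 - Bl * D * Brᵀ)⁻¹) ^ i * ((A0 - Bl * D * Brᵀ)⁻¹ * P)))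
          ≤ ⨆ i ∈ Finset.range m, matRange ((A0⁻¹) ^ i * (A0⁻¹ * P))) :=
  stmt_6_general A0 hA0 Bl Br D hAv P hBl
end

section
/- Let N_1 = Q_0^T B_r ⊗ I_n, M_1 = Q_0^{-1} B_l ⊗ I_n, and L_0 = I ⊗ Λ_0 + Λ_0 ⊗ I with Λ_0 = diag(λ_1,…,λ_n) and λ_i + λ_j ≠ 0. Then for i = (t-1)n + s and j = (p-1)n + q, the (i,j)-entry of N_1^T L_0^{-1} M_1 equals δ_{q,s} · e_s^T (L ((Q_0^T B_r e_t) ∘ (Q_0^{-1} B_l e_p))), where L is the Cauchy matrix with L_{ab} = 1/(λ_a + λ_b). Consequently, N_1^T L_0^{-1} M_1, viewed as a k×k block matrix with n×n blocks, has all blocks diagonal, with (t,p)-block equal to diag(L ((Q_0^T B_r e_t) ∘ (Q_0^{-1} B_l e_p))). -/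
/-!
`L₀` is the Kronecker sum of a diagonal matrix, hence itself diagonal with entries `λ_j + λ_i`,
and its inverse is the diagonal of reciprocals. Sandwiching any diagonal matrix between
`(A ⊗ I)ᵀ` and `B ⊗ I` only couples indices with the same `I`-component, which gives the factor
`δ_{q,s}`; the surviving sum over the first component is the Cauchy-matrix product.
-/

open Matrix Kronecker

namespace Matrix

variable {α l m n k : Type*}

theorem one_kronecker_diagonal_add_diagonal_kronecker_one [NonAssocSemiring α] [DecidableEq n]
    (d : n → α) :
    (1 : Matrix n n α) ⊗ₖ diagonal d + diagonal d ⊗ₖ (1 : Matrix n n α)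
      = diagonal fun x => d x.2 + d x.1 := by
  rw [← diagonal_one, diagonal_kronecker_diagonal, diagonal_kronecker_diagonal, diagonal_add]
  simp only [one_mul, mul_one]

theorem inv_diagonal_of_ne_zero [Fintype n] [DecidableEq n] [Field α] {v : n → α}
    (hv : ∀ i, v i ≠ 0) : (diagonal v)⁻¹ = diagonal v⁻¹ := by
  refine inv_eq_right_inv ?_
  rw [diagonal_mul_diagonal, ← diagonal_one]
  exact congrArg diagonal (funext fun i => mul_inv_cancel₀ (hv i))

theorem kronecker_one_transpose_mul_diagonal_mul_kronecker_one_apply [Semiring α]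
    [Fintype m] [Fintype n] [DecidableEq m] [DecidableEq n] (A : Matrix m k α) (B : Matrix m l α)
    (D : m × n → α) (t : k) (s : n) (p : l) (q : n) :
    (transpose (A ⊗ₖ (1 : Matrix n n α)) * diagonal D * (B ⊗ₖ (1 : Matrix n n α))) (t, s) (p, q)
      = if q = s then ∑ a, A a t * D (a, s) * B a p else 0 := by
  rw [mul_apply]
  simp only [mul_diagonal, transpose_apply, kroneckerMap_apply, one_apply,
    Fintype.sum_prod_type, mul_ite, ite_mul, mul_one, mul_zero, zero_mul,
    Finset.sum_ite_eq', Finset.mem_univ, if_true]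
  split_ifs with hqs
  · subst hqs
    rfl
  · exact Finset.sum_const_zero

end Matrix

theorem stmt_12_general {n k : ℕ}
    (Q0 : Matrix (Fin n) (Fin n) ℂ)
    (Bl Br : Matrix (Fin n) (Fin k) ℂ)
    (lam : Fin n → ℂ) (hlam : ∀ i j, lam i + lam j ≠ 0) :
    let L0 : Matrix (Fin n × Fin n) (Fin n × Fin n) ℂ :=
      (1 : Matrix (Fin n) (Fin n) ℂ) ⊗ₖ Matrix.diagonal lam
        + Matrix.diagonal lam ⊗ₖ (1 : Matrix (Fin n) (Fin n) ℂ)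
    let N1 := (Q0ᵀ * Br) ⊗ₖ (1 : Matrix (Fin n) (Fin n) ℂ)
    let M1 := (Q0⁻¹ * Bl) ⊗ₖ (1 : Matrix (Fin n) (Fin n) ℂ)
    let L : Matrix (Fin n) (Fin n) ℂ := Matrix.of fun a b => (lam a + lam b)⁻¹
    ∀ (t p : Fin k) (s q : Fin n),
      (N1ᵀ * L0⁻¹ * M1) (t, s) (p, q)
        = (if q = s then (1 : ℂ) else 0)
            * (L *ᵥ fun a => (Q0ᵀ * Br) a t * (Q0⁻¹ * Bl) a p) s := by
  intro L0 N1 M1 L t p s q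
  have hL0inv : L0⁻¹ = diagonal fun x => (lam x.2 + lam x.1)⁻¹ := by
    rw [show L0 = _ from one_kronecker_diagonal_add_diagonal_kronecker_one lam]
    exact inv_diagonal_of_ne_zero fun x => hlam x.2 x.1
  refine (congrFun₂ (congrArg (N1ᵀ * · * M1) hL0inv) (t, s) (p, q)).trans <|
    (kronecker_one_transpose_mul_diagonal_mul_kronecker_one_apply _ _ _ t s p q).trans ?_
  split_ifs
  · simp only [one_mul, L, mulVec, dotProduct, of_apply]
    exact Finset.sum_congr rfl fun a _ => by ring
  · rw [zero_mul]

/-- Entrywise structure of the `(1,1)`-block `N₁ᵀ L₀⁻¹ M₁` with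
`N₁ = Q₀ᵀBr ⊗ I`, `M₁ = Q₀⁻¹Bl ⊗ I`, `L₀ = I ⊗ Λ₀ + Λ₀ ⊗ I`:
the entry at row `(t,s)` and column `(p,q)` equals
`δ_{q,s} · eₛᵀ (L ((Q₀ᵀBr e_t) ∘ (Q₀⁻¹Bl e_p)))` where `L` is the Cauchy
matrix; hence every `n×n` block of the `k×k` block matrix is diagonal. -/
theorem stmt_12 {n k : ℕ}
    (Q0 : Matrix (Fin n) (Fin n) ℂ) (hQ0 : IsUnit Q0.det)
    (Bl Br : Matrix (Fin n) (Fin k) ℂ)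
    (lam : Fin n → ℂ) (hlam : ∀ i j, lam i + lam j ≠ 0) :
    let L0 : Matrix (Fin n × Fin n) (Fin n × Fin n) ℂ :=
      (1 : Matrix (Fin n) (Fin n) ℂ) ⊗ₖ Matrix.diagonal lam
        + Matrix.diagonal lam ⊗ₖ (1 : Matrix (Fin n) (Fin n) ℂ)
    let N1 := (Q0ᵀ * Br) ⊗ₖ (1 : Matrix (Fin n) (Fin n) ℂ)
    let M1 := (Q0⁻¹ * Bl) ⊗ₖ (1 : Matrix (Fin n) (Fin n) ℂ)
    let L : Matrix (Fin n) (Fin n) ℂ := Matrix.of fun a b => (lam a + lam b)⁻¹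
    ∀ (t p : Fin k) (s q : Fin n),
      (N1ᵀ * L0⁻¹ * M1) (t, s) (p, q)
        = (if q = s then (1 : ℂ) else 0)
            * (L *ᵥ fun a => (Q0ᵀ * Br) a t * (Q0⁻¹ * Bl) a p) s :=
  stmt_12_general Q0 Bl Br lam hlam
end
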